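/- Let Ω ⊂ ℝⁿ be a connected open set, and let v : Ω → ℝ ∪ {∞} be a lower semicontinuous function such that for every x₀ ∈ Ω there is a family of measurable sets D_r(x₀) ⊂ Ω (for small r > 0) with B_{cr}(x₀) ⊂ D_r(x₀) ⊂ B_{Cr}(x₀) for fixed constants 0 < c ≤ C, such that r ↦ (1/|D_r(x₀)|)∫_{D_r(x₀)} v dx is nondecreasing as r decreases and converges to v(x₀). Suppose v ≥ m almost everywhere in Ω and v(x₀) = m for some x₀ ∈ Ω. Then v = m almost everywhere in Ω. -/

import Mathlib

open MeasureTheory Metric Set Filter Topology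
open scoped ENNReal

/-!
The set `S = {x ∈ Ω | v x ≤ m}` is nonempty, relatively closed in `Ω` by lower semicontinuity,
and open: at `x ∈ S` the averages of `v` over `D_r(x)` increase to `v x ≤ m` as `r ↓ 0`, so
they are `≤ m`, while `v ≥ m` a.e.; hence `v = m` a.e. on `D_r(x) ⊇ B_{cr}(x)`, and lower
semicontinuity turns this into `v ≤ m` everywhere on that ball. By connectedness `S = Ω`.
-/

theorem AntitoneOn.le_of_tendsto_nhdsGT {α β : Type*} [LinearOrder α] [TopologicalSpace α]
    [OrderTopology α] [DenselyOrdered α] [Preorder β] [TopologicalSpace β]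
    [ClosedIciTopology β]
    {g : α → β} {a b r : α} {L : β} (hg : AntitoneOn g (Ioo a b))
    (hlim : Tendsto g (𝓝[>] a) (𝓝 L)) (hr : r ∈ Ioo a b) : g r ≤ L := by
  have := nhdsGT_neBot_of_exists_gt ⟨r, hr.1⟩
  refine ge_of_tendsto hlim ?_
  filter_upwards [Ioo_mem_nhdsGT hr.1] with s hs
  exact hg ⟨hs.1, hs.2.trans hr.2⟩ hr hs.2.le

theorem ae_restrict_eq_const_of_setAverage_le {α : Type*} [MeasurableSpace α] {μ : Measure α}
    {s : Set α} {f : α → ℝ} {m : ℝ} (hs : μ s ≠ ∞) (hf : IntegrableOn f s μ)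
    (hmf : ∀ᵐ x ∂μ.restrict s, m ≤ f x) (havg : ⨍ x in s, f x ∂μ ≤ m) :
    ∀ᵐ x ∂μ.restrict s, f x = m := by
  have hnonneg : 0 ≤ᵐ[μ.restrict s] fun x => f x - ⨍ a in s, f a ∂μ := by
    filter_upwards [hmf] with x hx
    simp only [Pi.zero_apply, sub_nonneg]
    linarith
  have hzero : ∫ x in s, f x - ⨍ a in s, f a ∂μ ∂μ = 0 := by
    rw [← neg_eq_zero, ← integral_neg]
    simpa only [neg_sub] using setIntegral_setAverage_sub hs hf
  filter_upwards [hmf, (integral_eq_zero_iff_of_nonneg_ae hnonneg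
    (hf.sub (integrableOn_const hs))).1 hzero] with x hmx hx
  simp only [Pi.zero_apply, sub_eq_zero] at hx
  linarith

theorem LowerSemicontinuousOn.le_of_ae_restrict_le {X : Type*} [TopologicalSpace X]
    [MeasurableSpace X] {μ : Measure X} [μ.IsOpenPosMeasure] {f : X → ℝ} {s U : Set X}
    {m : ℝ}
    (hf : LowerSemicontinuousOn f s) (hU : IsOpen U) (hUs : U ⊆ s)
    (h : ∀ᵐ x ∂μ.restrict U, f x ≤ m) {x : X} (hx : x ∈ U) : f x ≤ m := by
  by_contra! hmx
  have hnhds : {y | m < f y} ∩ U ∈ 𝓝 x := by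
    have := hf x (hUs hx) m hmx
    rw [nhdsWithin_eq_nhds.2 (mem_of_superset (hU.mem_nhds hx) hUs)] at this
    exact inter_mem this (hU.mem_nhds hx)
  refine (μ.measure_pos_of_mem_nhds hnhds).not_ge ?_
  calc μ ({y | m < f y} ∩ U) ≤ μ.restrict U {y | ¬f y ≤ m} :=
        (measure_mono (inter_subset_inter_left U fun _ => not_le.2)).trans
          (Measure.le_restrict_apply _ _)
    _ = 0 := ae_iff.1 h

theorem LowerSemicontinuousOn.closure_inter_preimage_Iic_inter_subset {X : Type*}
    [TopologicalSpace X] {f : X → ℝ} {s : Set X} (hf : LowerSemicontinuousOn f s) (m : ℝ) :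
    closure (s ∩ f ⁻¹' Iic m) ∩ s ⊆ s ∩ f ⁻¹' Iic m := by
  obtain ⟨V, hV, hsV⟩ := lowerSemicontinuousOn_iff_preimage_Iic.1 hf m
  rw [hsV]
  exact fun x hx => ⟨hx.2, closure_minimal inter_subset_right hV hx.1⟩

section MeanValueSets

variable {X : Type*} [MetricSpace X] [ProperSpace X] [MeasurableSpace X] {μ : Measure X}
  [μ.IsOpenPosMeasure] [IsFiniteMeasureOnCompacts μ] {Ω : Set X} {v : X → ℝ} {m : ℝ}

theorem inter_preimage_Iic_mem_nhds_of_le (hΩo : IsOpen Ω) (hlsc : LowerSemicontinuousOn v Ω)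
    (hloc : LocallyIntegrableOn v Ω μ) (hm : ∀ᵐ y ∂μ, y ∈ Ω → m ≤ v y)
    {c C r₀ : ℝ} {D : ℝ → Set X} {x : X} (hc : 0 < c) (hr₀ : 0 < r₀)
    (hD : ∀ r ∈ Ioo 0 r₀, MeasurableSet (D r) ∧ ball x (c * r) ⊆ D r ∧
      D r ⊆ ball x (C * r) ∧ D r ⊆ Ω)
    (hmono : AntitoneOn (fun r => ⨍ y in D r, v y ∂μ) (Ioo 0 r₀))
    (hlim : Tendsto (fun r => ⨍ y in D r, v y ∂μ) (𝓝[>] 0) (𝓝 (v x)))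
    (hx : x ∈ Ω) (hvx : v x ≤ m) : Ω ∩ v ⁻¹' Iic m ∈ 𝓝 x := by
  obtain ⟨ε, hε, hεΩ⟩ := nhds_basis_closedBall.mem_iff.1 (hΩo.mem_nhds hx)
  obtain ⟨r, hr, hCr⟩ : ∃ r ∈ Ioo 0 r₀, C * r < ε := by
    have hsmall : ∀ᶠ r in 𝓝[>] (0 : ℝ), C * r < ε := nhdsWithin_le_nhds <|
      ((continuous_const.mul continuous_id).tendsto' 0 0 (by simp)).eventually (gt_mem_nhds hε)
    exact (Eventually.and (Ioo_mem_nhdsGT hr₀) hsmall).exists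
  obtain ⟨hDmeas, hballD, hDball, hDΩ⟩ := hD r hr
  have hDK : D r ⊆ closedBall x ε :=
    hDball.trans (ball_subset_closedBall.trans (closedBall_subset_closedBall hCr.le))
  have hvm : ∀ᵐ y ∂μ.restrict (D r), v y = m := by
    refine ae_restrict_eq_const_of_setAverage_le ?_ ?_ ?_ ?_
    · exact measure_ne_top_of_subset hDK (isCompact_closedBall x ε).measure_ne_top
    · exact (hloc.integrableOn_compact_subset hεΩ (isCompact_closedBall x ε)).mono_set hDK
    · exact (ae_restrict_iff' hDmeas).2 (hm.mono fun y h hy => h (hDΩ hy))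
    · exact (hmono.le_of_tendsto_nhdsGT hlim hr).trans hvx
  have hle : ∀ y ∈ ball x (c * r), v y ≤ m := fun y hy =>
    hlsc.le_of_ae_restrict_le isOpen_ball (hballD.trans hDΩ)
      (ae_restrict_of_ae_restrict_of_subset hballD (hvm.mono fun _ => le_of_eq)) hy
  exact mem_of_superset (ball_mem_nhds x (mul_pos hc hr.1))
    fun y hy => ⟨hDΩ (hballD hy), hle y hy⟩

end MeanValueSets

theorem stmt_7_general {n : ℕ} (Ω : Set (EuclideanSpace ℝ (Fin n)))
    (hΩo : IsOpen Ω) (hΩc : IsConnected Ω)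
    (v : EuclideanSpace ℝ (Fin n) → ℝ)
    (hlsc : LowerSemicontinuousOn v Ω)
    (hloc : LocallyIntegrableOn v Ω volume)
    (c C : ℝ) (hc : 0 < c)
    (D : EuclideanSpace ℝ (Fin n) → ℝ → Set (EuclideanSpace ℝ (Fin n)))
    (hD : ∀ x₀ ∈ Ω, ∃ r₀ > (0 : ℝ),
      (∀ r ∈ Set.Ioo (0 : ℝ) r₀,
        MeasurableSet (D x₀ r) ∧ ball x₀ (c * r) ⊆ D x₀ r ∧
          D x₀ r ⊆ ball x₀ (C * r) ∧ D x₀ r ⊆ Ω) ∧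
      (∀ r ∈ Set.Ioo (0 : ℝ) r₀, ∀ s ∈ Set.Ioo (0 : ℝ) r₀, r ≤ s →
        (⨍ y in D x₀ s, v y ∂volume) ≤ ⨍ y in D x₀ r, v y ∂volume) ∧
      Tendsto (fun r => ⨍ y in D x₀ r, v y ∂volume) (nhdsWithin 0 (Set.Ioi 0))
        (nhds (v x₀)))
    (m : ℝ) (hm : ∀ᵐ x ∂volume, x ∈ Ω → m ≤ v x)
    (x₀ : EuclideanSpace ℝ (Fin n)) (hx₀ : x₀ ∈ Ω) (hvx₀ : v x₀ = m) :
    ∀ᵐ x ∂volume, x ∈ Ω → v x = m := by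
  set S := Ω ∩ v ⁻¹' Iic m
  have hS : IsOpen S := isOpen_iff_mem_nhds.2 fun x ⟨hx, hvx⟩ => by
    obtain ⟨r₀, hr₀, hgeo, hmono, hlim⟩ := hD x hx
    exact inter_preimage_Iic_mem_nhds_of_le hΩo hlsc hloc hm hc hr₀ hgeo
      (fun r hr s hs => hmono r hr s hs) hlim hx hvx
  have hΩS : Ω ⊆ S := hΩc.isPreconnected.subset_of_closure_inter_subset hS
    ⟨x₀, hx₀, hx₀, hvx₀.le⟩ (hlsc.closure_inter_preimage_Iic_inter_subset m)
  filter_upwards [hm] with x hmx hx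
  exact le_antisymm (hΩS hx).2 (hmx hx)

/-- Strong maximum principle for functions with the Caffarelli–Blank–Hao sub-mean-value
property: if the averages over the generalized balls D_r(x₀) are nondecreasing as r
decreases and converge to v(x₀), v ≥ m a.e. on the connected open set Ω, and v(x₀) = m at
some point x₀ ∈ Ω, then v = m a.e. on Ω. -/
theorem stmt_7 {n : ℕ} (Ω : Set (EuclideanSpace ℝ (Fin n)))
    (hΩo : IsOpen Ω) (hΩc : IsConnected Ω)
    (v : EuclideanSpace ℝ (Fin n) → ℝ)
    (hlsc : LowerSemicontinuousOn v Ω)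
    (hloc : LocallyIntegrableOn v Ω volume)
    (c C : ℝ) (hc : 0 < c) (hcC : c ≤ C)
    (D : EuclideanSpace ℝ (Fin n) → ℝ → Set (EuclideanSpace ℝ (Fin n)))
    (hD : ∀ x₀ ∈ Ω, ∃ r₀ > (0 : ℝ),
      (∀ r ∈ Set.Ioo (0 : ℝ) r₀,
        MeasurableSet (D x₀ r) ∧ ball x₀ (c * r) ⊆ D x₀ r ∧
          D x₀ r ⊆ ball x₀ (C * r) ∧ D x₀ r ⊆ Ω) ∧
      (∀ r ∈ Set.Ioo (0 : ℝ) r₀, ∀ s ∈ Set.Ioo (0 : ℝ) r₀, r ≤ s →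
        (⨍ y in D x₀ s, v y ∂volume) ≤ ⨍ y in D x₀ r, v y ∂volume) ∧
      Tendsto (fun r => ⨍ y in D x₀ r, v y ∂volume) (nhdsWithin 0 (Set.Ioi 0))
        (nhds (v x₀)))
    (m : ℝ) (hm : ∀ᵐ x ∂volume, x ∈ Ω → m ≤ v x)
    (x₀ : EuclideanSpace ℝ (Fin n)) (hx₀ : x₀ ∈ Ω) (hvx₀ : v x₀ = m) :
    ∀ᵐ x ∂volume, x ∈ Ω → v x = m :=
  stmt_7_general Ω hΩo hΩc v hlsc hloc c C hc D hD m hm x₀ hx₀ hvx₀
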